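/- arXiv:1510.05130 — 3 statements merged into one kernel-verified Lean document; each statement's English description precedes it below -/
import Mathlib

section
/- Let A = [a_ij] ∈ ℂ^{n×n}, n ≥ 2, be a DD matrix with nonzero diagonal entries, such that T(A) is an interwoven set of indices for A. Then A is an H-matrix. -/
open scoped BigOperators

noncomputable section

/-- Deleted `i`-th row sum of `|A|`, restricted to the index set `S`
    (i.e. `r_i^S(A) = ∑_{j ∈ S \ {i}} |a_{ij}|`). -/
def rowSumOn {ι : Type*} [Fintype ι] [DecidableEq ι]
    (A : Matrix ι ι ℂ) (S : Finset ι) (i : ι) : ℝ :=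
  ∑ j ∈ S.erase i, ‖A i j‖

/-- Deleted `i`-th row sum `r_i(A) = ∑_{j ≠ i} |a_{ij}|`. -/
def rowSum {ι : Type*} [Fintype ι] [DecidableEq ι]
    (A : Matrix ι ι ℂ) (i : ι) : ℝ :=
  rowSumOn A Finset.univ i

/-- `A` is strictly diagonally dominant (SDD). -/
def IsSDD {ι : Type*} [Fintype ι] [DecidableEq ι] (A : Matrix ι ι ℂ) : Prop :=
  ∀ i, rowSum A i < ‖A i i‖

/-- `A` is diagonally dominant (DD). -/
def IsDD {ι : Type*} [Fintype ι] [DecidableEq ι] (A : Matrix ι ι ℂ) : Prop :=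
  ∀ i, rowSum A i ≤ ‖A i i‖

/-- `A` is DD+ : diagonally dominant with at least one strictly dominant row. -/
def IsDDplus {ι : Type*} [Fintype ι] [DecidableEq ι] (A : Matrix ι ι ℂ) : Prop :=
  IsDD A ∧ ∃ i, rowSum A i < ‖A i i‖

/-- `A` is an H-matrix: there is a diagonal matrix `D` with positive diagonal
    entries such that `A * D` is SDD. -/
def IsHMatrix {ι : Type*} [Fintype ι] [DecidableEq ι] (A : Matrix ι ι ℂ) : Prop :=
  ∃ d : ι → ℝ, (∀ i, 0 < d i) ∧ IsSDD (A * Matrix.diagonal fun i => (d i : ℂ))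

/-- `T(A)`: the set of indices of non-SDD rows of `A`. -/
def TSet {ι : Type*} [Fintype ι] [DecidableEq ι] (A : Matrix ι ι ℂ) : Finset ι :=
  Finset.univ.filter fun i => ‖A i i‖ ≤ rowSum A i

/-- The principal submatrix `A|_{M²}` of `A` corresponding to the index set `M`. -/
def subMat {ι : Type*} [Fintype ι] [DecidableEq ι]
    (A : Matrix ι ι ℂ) (M : Finset ι) : Matrix {i // i ∈ M} {i // i ∈ M} ℂ :=
  Matrix.of fun i j => A i.val j.val

/-- There exists a nonzero elements chain `a_{i₀i₁}, a_{i₁i₂}, …, a_{i_{r-1}i_r}`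
    starting at `i₀` and ending at some `i_r ∉ T(A)`. -/
def HasChainOut {ι : Type*} [Fintype ι] [DecidableEq ι]
    (A : Matrix ι ι ℂ) (i₀ : ι) : Prop :=
  ∃ (r : ℕ) (c : Fin (r + 1) → ι), 0 < r ∧ c 0 = i₀ ∧
    (∀ k : Fin r, A (c k.castSucc) (c k.succ) ≠ 0) ∧ c (Fin.last r) ∉ TSet A

/-- `S` is an interwoven set of indices for `A`: `S` is a proper subset of `N`
    and either `|S| ≤ 1`, or `|S| = s > 1` and there exist distinct
    `p₁,…,p_{s-1} ∈ S` and `q₁,…,q_{s-1}` with `q₁ ∈ N \ S`, `a_{p₁q₁} ≠ 0`, and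
    `q_i ∈ (N \ S) ∪ {p₁,…,p_{i-1}}`, `a_{p_iq_i} ≠ 0` for `i = 2,…,s-1`. -/
def Interwoven {ι : Type*} [Fintype ι] [DecidableEq ι]
    (A : Matrix ι ι ℂ) (S : Finset ι) : Prop :=
  S ⊂ Finset.univ ∧
    (S.card ≤ 1 ∨
      (1 < S.card ∧ ∃ p q : Fin (S.card - 1) → ι,
        Function.Injective p ∧ (∀ i, p i ∈ S) ∧
        ∀ i, A (p i) (q i) ≠ 0 ∧ (q i ∉ S ∨ ∃ j, j < i ∧ q i = p j)))

/-- The comparison matrix `ℳ(A)`. -/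
def CompMat {ι : Type*} [Fintype ι] [DecidableEq ι] (A : Matrix ι ι ℂ) : Matrix ι ι ℝ :=
  Matrix.of fun i j => if i = j then ‖A i i‖ else -‖A i j‖

/-!
Give every index a level `ℓ`, with the indices outside `T(A)` on level `0`, such that each row
`i ∈ T(A)` has a nonzero entry `a_ij` in a column of strictly lower level; interwovenness
provides such levels along the chain `p₁, p₂, …`. Scale column `j` by `1 - t ^ (ℓ j + 1)` for a
small `t > 0`. Strictly dominant rows stay strictly dominant for small `t`. A row `i ∈ T(A)` loses
`|a_ii| t ^ (ℓ i + 1)` on its diagonal but at least `|a_ij| t ^ (ℓ j + 1)` off it, which is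
larger for small `t` since `ℓ j < ℓ i`.
-/

open Filter Topology Finset

section
variable {ι : Type*}

lemma exists_level_of_chain {A : Matrix ι ι ℂ} {S : Finset ι}
    (hS : ∀ i ∈ S, ∃ j ≠ i, A i j ≠ 0) {k : ℕ} (p q : Fin k → ι) (hp : Function.Injective p)
    (hpS : ∀ m, p m ∈ S) (hcard : #S ≤ k + 1)
    (hpq : ∀ m, A (p m) (q m) ≠ 0 ∧ (q m ∉ S ∨ ∃ m', m' < m ∧ q m = p m')) :
    ∃ ℓ : ι → ℕ, ∀ i ∈ S, ∃ j, A i j ≠ 0 ∧ ℓ j < ℓ i := by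
  classical
  -- `p m` sits on level `m + 1`, the single index of `S` missed by `p` on level `k + 1`,
  -- and everything outside `S` on level `0`
  set ℓ := Function.extend p (fun m : Fin k => (m : ℕ) + 1) fun i => if i ∈ S then k + 1 else 0
  have hℓp : ∀ m, ℓ (p m) = m + 1 := hp.extend_apply _ _
  have hℓ : ∀ i, (¬∃ m, p m = i) → ℓ i = if i ∈ S then k + 1 else 0 :=
    Function.extend_apply' _ _
  have hmissed : ∀ i ∈ S, ∀ j ∈ S, (¬∃ m, p m = i) → (¬∃ m, p m = j) → i = j := by
    have hsub : univ.image p ⊆ S := image_subset_iff.2 fun m _ => hpS m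
    have hle : #(S \ univ.image p) ≤ 1 := by
      rw [card_sdiff_of_subset hsub, card_image_of_injective _ hp, card_univ, Fintype.card_fin]
      omega
    intro i hi j hj hip hjp
    exact card_le_one.1 hle i (by simpa [hi] using hip) j (by simpa [hj] using hjp)
  refine ⟨ℓ, fun i hi => ?_⟩
  by_cases hip : ∃ m, p m = i
  · obtain ⟨m, rfl⟩ := hip
    obtain ⟨hA, hq | ⟨m', hm', hqm⟩⟩ := hpq m
    · refine ⟨q m, hA, ?_⟩
      rw [hℓp, hℓ _ fun ⟨m', h⟩ => hq (h ▸ hpS m'), if_neg hq]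
      omega
    · exact ⟨q m, hA, by rw [hℓp, hqm, hℓp]; exact Nat.succ_lt_succ hm'⟩
  · obtain ⟨j, hji, hA⟩ := hS i hi
    refine ⟨j, hA, ?_⟩
    rw [hℓ i hip, if_pos hi]
    by_cases hjp : ∃ m, p m = j
    · obtain ⟨m, rfl⟩ := hjp
      rw [hℓp]
      omega
    · rw [hℓ j hjp]
      split_ifs with hj
      · exact absurd (hmissed j hj i hi hjp hip) hji
      · omega

def levelWeight (ℓ : ι → ℕ) (t : ℝ) (i : ι) : ℝ := 1 - t ^ (ℓ i + 1)

lemma levelWeight_pos (ℓ : ι → ℕ) {t : ℝ} (ht : t ∈ Set.Ioo 0 1) (i : ι) :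
    0 < levelWeight ℓ t i :=
  sub_pos.2 (pow_lt_one₀ ht.1.le ht.2 (Nat.succ_ne_zero _))

lemma levelWeight_le_one (ℓ : ι → ℕ) {t : ℝ} (ht : 0 ≤ t) (i : ι) : levelWeight ℓ t i ≤ 1 :=
  sub_le_self _ (pow_nonneg ht _)

lemma tendsto_levelWeight (ℓ : ι → ℕ) (i : ι) :
    Tendsto (fun t => levelWeight ℓ t i) (𝓝[>] 0) (𝓝 1) :=
  ((continuous_const.sub (continuous_pow _)).tendsto' 0 1 (by simp)).mono_left
    nhdsWithin_le_nhds

end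

section
variable {ι : Type*} [Fintype ι] [DecidableEq ι]

lemma norm_mul_diagonal_apply (A : Matrix ι ι ℂ) {d : ι → ℝ} (hd : ∀ j, 0 ≤ d j) (i j : ι) :
    ‖(A * Matrix.diagonal fun k => (d k : ℂ)) i j‖ = ‖A i j‖ * d j := by
  rw [Matrix.mul_diagonal, norm_mul, Complex.norm_real, Real.norm_of_nonneg (hd j)]

lemma rowSum_mul_diagonal (A : Matrix ι ι ℂ) {d : ι → ℝ} (hd : ∀ j, 0 ≤ d j) (i : ι) :
    rowSum (A * Matrix.diagonal fun k => (d k : ℂ)) i = ∑ j ∈ univ.erase i, ‖A i j‖ * d j :=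
  sum_congr rfl fun j _ => norm_mul_diagonal_apply A hd i j

lemma exists_ne_ne_zero_of_mem_TSet {A : Matrix ι ι ℂ} {i : ι} (hAii : A i i ≠ 0)
    (hi : i ∈ TSet A) : ∃ j ≠ i, A i j ≠ 0 := by
  by_contra! h
  have hr : rowSum A i = 0 :=
    sum_eq_zero fun j hj => by rw [h j (ne_of_mem_erase hj), norm_zero]
  have hle : ‖A i i‖ ≤ rowSum A i := (mem_filter.1 hi).2
  exact hAii (norm_le_zero_iff.1 (hr ▸ hle))

lemma sum_norm_mul_le_rowSum (A : Matrix ι ι ℂ) {d : ι → ℝ} (hd : ∀ j, d j ≤ 1) (i : ι) :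
    ∑ j ∈ univ.erase i, ‖A i j‖ * d j ≤ rowSum A i :=
  sum_le_sum fun j _ => mul_le_of_le_one_right (norm_nonneg _) (hd j)

lemma sum_norm_mul_one_sub_le (A : Matrix ι ι ℂ) {e : ι → ℝ} (he : ∀ j, 0 ≤ e j) {i j : ι}
    (hji : j ≠ i) :
    ∑ k ∈ univ.erase i, ‖A i k‖ * (1 - e k) ≤ rowSum A i - ‖A i j‖ * e j := by
  have hj : ‖A i j‖ * e j ≤ ∑ k ∈ univ.erase i, ‖A i k‖ * e k :=
    single_le_sum (f := fun k => ‖A i k‖ * e k) (fun k _ => mul_nonneg (norm_nonneg _) (he k))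
      (mem_erase.2 ⟨hji, mem_univ j⟩)
  simp only [mul_one_sub, sum_sub_distrib]
  exact sub_le_sub_left hj _

lemma eventually_weighted_row_lt_of_rowSum_lt {A : Matrix ι ι ℂ} (ℓ : ι → ℕ) {i : ι}
    (hi : rowSum A i < ‖A i i‖) :
    ∀ᶠ t in 𝓝[>] 0,
      ∑ j ∈ univ.erase i, ‖A i j‖ * levelWeight ℓ t j < ‖A i i‖ * levelWeight ℓ t i := by
  have hlim := (tendsto_levelWeight ℓ i).const_mul ‖A i i‖
  rw [mul_one] at hlim
  filter_upwards [self_mem_nhdsWithin, hlim.eventually_const_lt hi] with t ht hrow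
  exact (sum_norm_mul_le_rowSum A (levelWeight_le_one ℓ (le_of_lt ht)) i).trans_lt hrow

lemma eventually_weighted_row_lt_of_level_lt {A : Matrix ι ι ℂ} {ℓ : ι → ℕ} {i j : ι}
    (hDD : rowSum A i ≤ ‖A i i‖) (hAij : A i j ≠ 0) (hℓ : ℓ j < ℓ i) :
    ∀ᶠ t in 𝓝[>] 0,
      ∑ k ∈ univ.erase i, ‖A i k‖ * levelWeight ℓ t k < ‖A i i‖ * levelWeight ℓ t i := by
  have hlim : Tendsto (fun t : ℝ => ‖A i i‖ * t ^ (ℓ i - ℓ j)) (𝓝[>] 0) (𝓝 0) :=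
    (((continuous_pow _).const_mul _).tendsto' 0 0
      (by simp [Nat.sub_ne_zero_of_lt hℓ])).mono_left nhdsWithin_le_nhds
  filter_upwards [self_mem_nhdsWithin, hlim.eventually_lt_const (norm_pos_iff.2 hAij)]
    with t (ht : 0 < t) hsmall
  have hdom : ‖A i i‖ * t ^ (ℓ i + 1) < ‖A i j‖ * t ^ (ℓ j + 1) := by
    have hsplit : t ^ (ℓ i + 1) = t ^ (ℓ i - ℓ j) * t ^ (ℓ j + 1) := by
      rw [← pow_add]; congr 1; omega
    rw [hsplit, ← mul_assoc]
    exact mul_lt_mul_of_pos_right hsmall (pow_pos ht _)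
  have hsum := sum_norm_mul_one_sub_le A (e := fun k => t ^ (ℓ k + 1))
    (fun k => pow_nonneg ht.le _) fun h => hℓ.ne (congrArg ℓ h)
  simp only [levelWeight]
  linarith

theorem IsDD.isHMatrix_of_level {A : Matrix ι ι ℂ} (hDD : IsDD A) (ℓ : ι → ℕ)
    (hℓ : ∀ i ∈ TSet A, ∃ j, A i j ≠ 0 ∧ ℓ j < ℓ i) : IsHMatrix A := by
  have hrow : ∀ i, ∀ᶠ t in 𝓝[>] 0,
      ∑ j ∈ univ.erase i, ‖A i j‖ * levelWeight ℓ t j < ‖A i i‖ * levelWeight ℓ t i := by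
    intro i
    by_cases hi : i ∈ TSet A
    · obtain ⟨j, hAij, hlt⟩ := hℓ i hi
      exact eventually_weighted_row_lt_of_level_lt (hDD i) hAij hlt
    · exact eventually_weighted_row_lt_of_rowSum_lt ℓ (by simpa [TSet] using hi)
  obtain ⟨t, ht, hSDD⟩ := 
    (Eventually.and (Ioo_mem_nhdsGT one_pos) (eventually_all.2 hrow)).exists
  have hw : ∀ i, 0 ≤ levelWeight ℓ t i := fun i => (levelWeight_pos ℓ ht i).le
  refine ⟨levelWeight ℓ t, levelWeight_pos ℓ ht, fun i => ?_⟩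
  rw [rowSum_mul_diagonal A hw, norm_mul_diagonal_apply A hw]
  exact hSDD i

lemma Interwoven.exists_level {A : Matrix ι ι ℂ} {S : Finset ι} (hint : Interwoven A S)
    (hS : ∀ i ∈ S, ∃ j ≠ i, A i j ≠ 0) :
    ∃ ℓ : ι → ℕ, ∀ i ∈ S, ∃ j, A i j ≠ 0 ∧ ℓ j < ℓ i := by
  obtain ⟨-, hsmall | ⟨hcard, p, q, hp, hpS, hpq⟩⟩ := hint
  · exact exists_level_of_chain hS Fin.elim0 Fin.elim0 (fun m => m.elim0) (fun m => m.elim0)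
      hsmall fun m => m.elim0
  · exact exists_level_of_chain hS p q hp hpS (by omega) hpq

end

theorem farid_hmatrix_general (n : ℕ)
    (A : Matrix (Fin n) (Fin n) ℂ) (hDD : IsDD A)
    (hdiag : ∀ i, A i i ≠ 0) (hint : Interwoven A (TSet A)) :
    IsHMatrix A := by
  obtain ⟨ℓ, hℓ⟩ := hint.exists_level fun i hi => exists_ne_ne_zero_of_mem_TSet (hdiag i) hi
  exact hDD.isHMatrix_of_level ℓ hℓ

/-- A DD matrix `A ∈ ℂⁿˣⁿ`, `n ≥ 2`, with nonzero diagonal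
entries such that `T(A)` is an interwoven set of indices for `A`,
is an H-matrix. -/
theorem farid_hmatrix (n : ℕ) (hn : 2 ≤ n)
    (A : Matrix (Fin n) (Fin n) ℂ) (hDD : IsDD A)
    (hdiag : ∀ i, A i i ≠ 0) (hint : Interwoven A (TSet A)) :
    IsHMatrix A :=
  farid_hmatrix_general n A hDD hdiag hint

end
end

section
/- Let A = [a_ij] ∈ ℂ^{n×n}, n ≥ 2, be a DD matrix. Then there exists a nonempty proper subset S of N such that A is S-SDD if and only if T(A) = ∅ or the principal submatrix A|_{T(A)²} is an SDD matrix. -/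
open scoped BigOperators

noncomputable section

/-- `A` is `S`-SDD for a nonempty proper subset `S` of the index set. -/
def IsSSDD {ι : Type*} [Fintype ι] [DecidableEq ι]
    (A : Matrix ι ι ℂ) (S : Finset ι) : Prop :=
  (∀ i ∈ S, rowSumOn A S i < ‖A i i‖) ∧
    ∀ i ∈ S, ∀ j ∈ Sᶜ, rowSumOn A Sᶜ i * rowSumOn A S j <
      (‖A i i‖ - rowSumOn A S i) *
        (‖A j j‖ - rowSumOn A Sᶜ j)

/-! If `A` is `S`-SDD, both `A|_{S²}` and `A|_{S̄²}` are SDD, and `T(A)` lies entirely in `S` or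
in `S̄`: for `i ∈ T(A) ∩ S` and `j ∈ T(A) ∩ S̄` the two positive factors
`|a_ii| - r_i^S(A) ≤ r_i^{S̄}(A)` and `|a_jj| - r_j^{S̄}(A) ≤ r_j^S(A)` would contradict
condition (ii). Conversely, if `T(A) = ∅` then `A` is SDD and hence `S`-SDD for every `S`;
otherwise diagonal dominance makes `|a_ii| - r_i^T(A) = r_i^{T̄}(A)` for `i ∈ T = T(A)`, and
condition (ii) for `S = T` reduces to strict dominance of the rows outside `T`. -/

open Finset

section

variable {ι : Type*} [Fintype ι] [DecidableEq ι] (A : Matrix ι ι ℂ)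

lemma rowSumOn_nonneg (S : Finset ι) (i : ι) : 0 ≤ rowSumOn A S i :=
  sum_nonneg fun _ _ => norm_nonneg _

lemma rowSumOn_mono {S S' : Finset ι} (h : S ⊆ S') (i : ι) :
    rowSumOn A S i ≤ rowSumOn A S' i :=
  sum_le_sum_of_subset_of_nonneg (erase_subset_erase _ h) fun _ _ _ => norm_nonneg _

lemma rowSumOn_add_rowSumOn_compl (S : Finset ι) (i : ι) :
    rowSumOn A S i + rowSumOn A Sᶜ i = rowSum A i := by
  rw [rowSumOn, rowSumOn, rowSum, rowSumOn, ← sum_union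
    (disjoint_of_subset_left (erase_subset _ _)
      (disjoint_of_subset_right (erase_subset _ _) disjoint_compl_right)),
    ← erase_union_distrib, union_compl]

lemma rowSum_subMat (M : Finset ι) (i : M) :
    rowSum (subMat A M) i = rowSumOn A M i := by
  rw [rowSum, rowSumOn, rowSumOn, sum_erase_eq_sub (mem_univ i), sum_erase_eq_sub i.2]
  congr 1
  exact sum_coe_sort M fun x => ‖A i x‖

lemma isSDD_subMat_iff (M : Finset ι) :
    IsSDD (subMat A M) ↔ ∀ i ∈ M, rowSumOn A M i < ‖A i i‖ := by
  simp only [IsSDD, rowSum_subMat, Subtype.forall]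
  rfl

lemma isSDD_subMat_of_subset {M M' : Finset ι} (h : IsSDD (subMat A M)) (hM : M' ⊆ M) :
    IsSDD (subMat A M') := by
  rw [isSDD_subMat_iff] at h ⊢
  exact fun i hi => (rowSumOn_mono A hM i).trans_lt (h i (hM hi))

lemma mem_TSet {i : ι} : i ∈ TSet A ↔ ‖A i i‖ ≤ rowSum A i := by
  simp [TSet]

lemma TSet_eq_empty_iff : TSet A = ∅ ↔ IsSDD A := by
  simp [TSet, IsSDD, filter_eq_empty_iff]

lemma sub_rowSumOn_le_of_mem_TSet {i : ι} (hi : i ∈ TSet A) (S : Finset ι) :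
    ‖A i i‖ - rowSumOn A S i ≤ rowSumOn A Sᶜ i := by
  linarith [(mem_TSet A).1 hi, rowSumOn_add_rowSumOn_compl A S i]

lemma TSet_ne_univ {i : ι} (hi : i ∈ TSet A) (h : IsSDD (subMat A (TSet A))) :
    TSet A ≠ univ := by
  intro hU
  have hlt := (isSDD_subMat_iff A _).1 h i hi
  rw [hU] at hlt
  exact ((mem_TSet A).1 hi).not_gt hlt

namespace IsSSDD

variable {A} {S : Finset ι}

lemma isSDD_subMat (h : IsSSDD A S) : IsSDD (subMat A S) :=
  (isSDD_subMat_iff A S).2 h.1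

lemma isSDD_subMat_compl (h : IsSSDD A S) (hS : S.Nonempty) : IsSDD (subMat A Sᶜ) := by
  obtain ⟨i, hi⟩ := hS
  refine (isSDD_subMat_iff A Sᶜ).2 fun j hj => sub_pos.1 <|
    pos_of_mul_pos_right (a := ‖A i i‖ - rowSumOn A S i) ?_ (sub_pos.2 (h.1 i hi)).le
  exact (mul_nonneg (rowSumOn_nonneg A _ i) (rowSumOn_nonneg A _ j)).trans_lt (h.2 i hi j hj)

lemma TSet_subset_or (h : IsSSDD A S) : TSet A ⊆ S ∨ TSet A ⊆ Sᶜ := by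
  by_contra! hc
  obtain ⟨j, hjT, hjS⟩ := not_subset.1 hc.1
  obtain ⟨i, hiT, hiS⟩ := not_subset.1 hc.2
  rw [mem_compl, not_not] at hiS
  have hj : j ∈ Sᶜ := mem_compl.2 hjS
  have hi_pos : 0 < ‖A i i‖ - rowSumOn A S i := sub_pos.2 (h.1 i hiS)
  have hj_pos : 0 < ‖A j j‖ - rowSumOn A Sᶜ j :=
    sub_pos.2 ((isSDD_subMat_iff A _).1 (h.isSDD_subMat_compl ⟨i, hiS⟩) j hj)
  have hj_le := sub_rowSumOn_le_of_mem_TSet A hjT Sᶜ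
  rw [compl_compl] at hj_le
  have := mul_le_mul (sub_rowSumOn_le_of_mem_TSet A hiT S) hj_le hj_pos.le
    (rowSumOn_nonneg A _ i)
  linarith [h.2 i hiS j hj]

lemma isSDD_subMat_TSet (h : IsSSDD A S) (hS : S.Nonempty) : IsSDD (subMat A (TSet A)) :=
  h.TSet_subset_or.elim (isSDD_subMat_of_subset A h.isSDD_subMat)
    (isSDD_subMat_of_subset A (h.isSDD_subMat_compl hS))

end IsSSDD

lemma IsSDD.isSSDD {A : Matrix ι ι ℂ} (h : IsSDD A) (S : Finset ι) : IsSSDD A S := by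
  refine ⟨fun i _ => (rowSumOn_mono A (subset_univ S) i).trans_lt (h i), fun i _ j _ => ?_⟩
  have hi : rowSumOn A Sᶜ i < ‖A i i‖ - rowSumOn A S i := by
    linarith [h i, rowSumOn_add_rowSumOn_compl A S i]
  have hj : rowSumOn A S j < ‖A j j‖ - rowSumOn A Sᶜ j := by
    linarith [h j, rowSumOn_add_rowSumOn_compl A S j]
  exact mul_lt_mul'' hi hj (rowSumOn_nonneg A _ i) (rowSumOn_nonneg A _ j)

lemma IsSDD.exists_isSSDD [Nontrivial ι] {A : Matrix ι ι ℂ} (h : IsSDD A) :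
    ∃ S : Finset ι, S.Nonempty ∧ S ≠ univ ∧ IsSSDD A S := by
  obtain ⟨i⟩ := ‹Nontrivial ι›.to_nonempty
  exact ⟨{i}, singleton_nonempty i, singleton_ne_univ i, h.isSSDD _⟩

lemma isSSDD_TSet (hDD : IsDD A) (h : IsSDD (subMat A (TSet A))) : IsSSDD A (TSet A) := by
  rw [isSDD_subMat_iff] at h
  refine ⟨h, fun i hi j hj => ?_⟩
  have hi_eq : ‖A i i‖ - rowSumOn A (TSet A) i = rowSumOn A (TSet A)ᶜ i := by
    linarith [le_antisymm (hDD i) ((mem_TSet A).1 hi), rowSumOn_add_rowSumOn_compl A (TSet A) i]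
  have hi_pos : 0 < rowSumOn A (TSet A)ᶜ i := by linarith [h i hi]
  have hj_lt : rowSumOn A (TSet A) j < ‖A j j‖ - rowSumOn A (TSet A)ᶜ j := by
    have := not_le.1 ((mem_TSet A).not.1 (mem_compl.1 hj))
    linarith [rowSumOn_add_rowSumOn_compl A (TSet A) j]
  rw [hi_eq]
  exact mul_lt_mul_of_pos_left hj_lt hi_pos

end

/-- A DD matrix `A ∈ ℂⁿˣⁿ`, `n ≥ 2`, is `S`-SDD for some
nonempty proper subset `S` of `N` if and only if `T(A) = ∅` or `A|_{T(A)²}`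
is SDD. -/
theorem ssdd_iff_tset_sdd (n : ℕ) (hn : 2 ≤ n)
    (A : Matrix (Fin n) (Fin n) ℂ) (hDD : IsDD A) :
    (∃ S : Finset (Fin n), S.Nonempty ∧ S ≠ Finset.univ ∧ IsSSDD A S) ↔
      (TSet A = ∅ ∨ IsSDD (subMat A (TSet A))) := by
  constructor
  · rintro ⟨S, hS, -, h⟩
    exact Or.inr (h.isSDD_subMat_TSet hS)
  · intro h
    rcases (TSet A).eq_empty_or_nonempty with hT | ⟨i, hi⟩
    · have := Fin.nontrivial_iff_two_le.2 hn
      exact ((TSet_eq_empty_iff A).1 hT).exists_isSSDD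
    · have hsub := h.resolve_left (ne_empty_of_mem hi)
      exact ⟨TSet A, ⟨i, hi⟩, TSet_ne_univ A hi hsub, isSSDD_TSet A hDD hsub⟩

end
end

section
/- Let A = [a_ij] ∈ ℂ^{n×n}, n ≥ 2, be a DD matrix. Then A is an H-matrix if and only if T(A) = ∅, or the principal submatrix A|_{T(A)²} is an H-matrix. -/
open scoped BigOperators

noncomputable section

/-!
Scaling the columns of `A` by positive weights `d` turns the H-matrix property into the
existence of `d > 0` with `∑_{j ≠ i} |a_ij| d_j < |a_ii| d_i` for every row. Restricting such
weights to `T(A)` shows that `A|_{T(A)²}` is an H-matrix. Conversely, extend weights `d` for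
`A|_{T(A)²}` by `0` and add a large constant `M`: a row in `T(A)` gains `M r_i ≤ M |a_ii|` from
diagonal dominance and keeps its strict inequality from `d`, while a row outside `T(A)` has a
positive gap `|a_ii| - r_i` that absorbs the contribution of `d` once `M` is large enough.
-/

open Finset Filter

theorem Finset.sum_univ_erase_subtype {ι β : Type*} [DecidableEq ι] [AddCommGroup β]
    (S : Finset ι) (i : S) (f : ι → β) :
    ∑ j ∈ (univ : Finset S).erase i, f j = ∑ j ∈ S.erase i, f j := by
  rw [sum_erase_eq_sub (mem_univ i), sum_erase_eq_sub i.property, univ_eq_attach,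
    sum_attach S f]

theorem exists_pos_forall_lt_mul {ι : Type*} (s : Finset ι) (c g : ι → ℝ)
    (hg : ∀ i ∈ s, 0 < g i) : ∃ M : ℝ, 0 < M ∧ ∀ i ∈ s, c i < M * g i :=
  ((eventually_gt_atTop 0).and <| (eventually_all_finset s).2 fun i hi =>
    (tendsto_id.atTop_mul_const (hg i hi)).eventually_gt_atTop (c i)).exists

section HMatrix

variable {ι : Type*} [Fintype ι] [DecidableEq ι]

theorem isHMatrix_iff {A : Matrix ι ι ℂ} :
    IsHMatrix A ↔ ∃ d : ι → ℝ, (∀ i, 0 < d i) ∧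
      ∀ i, ∑ j ∈ univ.erase i, ‖A i j‖ * d j < ‖A i i‖ * d i := by
  refine exists_congr fun d => and_congr_right fun hd => forall_congr' fun i => ?_
  have hnorm : ∀ j, ‖(A * Matrix.diagonal fun k => (d k : ℂ)) i j‖ = ‖A i j‖ * d j := fun j => by
    rw [Matrix.mul_diagonal, norm_mul, Complex.norm_real, Real.norm_of_nonneg (hd j).le]
  simp only [rowSum, rowSumOn, hnorm]

theorem isHMatrix_subMat_iff {A : Matrix ι ι ℂ} {S : Finset ι} :
    IsHMatrix (subMat A S) ↔ ∃ d : ι → ℝ, (∀ i ∈ S, 0 < d i) ∧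
      ∀ i ∈ S, ∑ j ∈ S.erase i, ‖A i j‖ * d j < ‖A i i‖ * d i := by
  rw [isHMatrix_iff]
  constructor
  · rintro ⟨d, hd, hrow⟩
    set e : ι → ℝ := fun j => if h : j ∈ S then d ⟨j, h⟩ else 1
    have he : ∀ j : S, e j = d j := fun j => dif_pos j.property
    refine ⟨e, fun i hi => he ⟨i, hi⟩ ▸ hd _, fun i hi => ?_⟩
    rw [← sum_univ_erase_subtype S ⟨i, hi⟩ fun j => ‖A i j‖ * e j,
      show e i = d ⟨i, hi⟩ from he ⟨i, hi⟩]
    simp only [he]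
    exact hrow ⟨i, hi⟩
  · rintro ⟨d, hd, hrow⟩
    refine ⟨fun j => d j, fun j => hd j j.property, fun i => ?_⟩
    have := hrow i i.property
    rw [← sum_univ_erase_subtype S i] at this
    simpa [subMat] using this

theorem IsHMatrix.subMat {A : Matrix ι ι ℂ} (h : IsHMatrix A) (S : Finset ι) :
    IsHMatrix (subMat A S) := by
  obtain ⟨d, hd, hrow⟩ := isHMatrix_iff.1 h
  refine isHMatrix_subMat_iff.2 ⟨d, fun i _ => hd i, fun i _ => ?_⟩
  refine lt_of_le_of_lt (sum_le_sum_of_subset_of_nonneg ?_ fun j _ _ => ?_) (hrow i)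
  · exact erase_subset_erase _ (subset_univ S)
  · exact mul_nonneg (norm_nonneg _) (hd j).le

theorem IsSDD.isHMatrix {A : Matrix ι ι ℂ} (h : IsSDD A) : IsHMatrix A :=
  isHMatrix_iff.2 ⟨fun _ => 1, fun _ => one_pos, fun i => by
    simp only [mul_one]
    exact h i⟩

theorem isSDD_of_tSet_eq_empty {A : Matrix ι ι ℂ} (h : TSet A = ∅) : IsSDD A := fun i => by
  simpa [TSet] using Finset.eq_empty_iff_forall_notMem.1 h i

theorem isHMatrix_of_subMat {A : Matrix ι ι ℂ} {S : Finset ι}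
    (hDD : ∀ i ∈ S, rowSum A i ≤ ‖A i i‖) (hSDD : ∀ i ∉ S, rowSum A i < ‖A i i‖)
    (hS : IsHMatrix (subMat A S)) : IsHMatrix A := by
  obtain ⟨d, hd, hrow⟩ := isHMatrix_subMat_iff.1 hS
  set C : ι → ℝ := fun i => ∑ j ∈ S.erase i, ‖A i j‖ * d j
  obtain ⟨M, hM, hMC⟩ := exists_pos_forall_lt_mul Sᶜ C (fun i => ‖A i i‖ - rowSum A i)
    fun i hi => sub_pos.2 (hSDD i (mem_compl.1 hi))
  set u : ι → ℝ := fun j => if j ∈ S then d j else 0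
  have hu : ∀ j, 0 ≤ u j := fun j => by
    by_cases hj : j ∈ S <;> simp [u, hj, (hd j _).le]
  have hsum : ∀ i, ∑ j ∈ univ.erase i, ‖A i j‖ * (M + u j) = rowSum A i * M + C i := by
    intro i
    have hC : ∑ j ∈ univ.erase i, ‖A i j‖ * u j = C i := by
      simp only [u, C, mul_ite, mul_zero]
      rw [← sum_filter]
      congr 1
      ext j
      simp [and_comm]
    simp only [mul_add, sum_add_distrib, hC, ← sum_mul, rowSum, rowSumOn]
  refine isHMatrix_iff.2 ⟨fun j => M + u j, fun j => add_pos_of_pos_of_nonneg hM (hu j),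
    fun i => ?_⟩
  show _ < ‖A i i‖ * (M + u i)
  rw [hsum]
  by_cases hi : i ∈ S
  · rw [show u i = d i from if_pos hi, mul_add]
    exact add_lt_add_of_le_of_lt (mul_le_mul_of_nonneg_right (hDD i hi) hM.le) (hrow i hi)
  · rw [show u i = 0 from if_neg hi]
    linarith [hMC i (mem_compl.2 hi)]

end HMatrix

theorem dd_hmatrix_iff_tset_hmatrix_general (n : ℕ)
    (A : Matrix (Fin n) (Fin n) ℂ) (hDD : IsDD A) :
    IsHMatrix A ↔ (TSet A = ∅ ∨ IsHMatrix (subMat A (TSet A))) := by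
  refine ⟨fun h => Or.inr (h.subMat _), ?_⟩
  rintro (hT | hT)
  · exact (isSDD_of_tSet_eq_empty hT).isHMatrix
  · refine isHMatrix_of_subMat (fun i _ => hDD i) (fun i hi => ?_) hT
    simpa [TSet] using hi

/-- main characterization. A DD matrix `A ∈ ℂⁿˣⁿ`, `n ≥ 2`,
is an H-matrix iff `T(A) = ∅` or the principal submatrix `A|_{T(A)²}` is an
H-matrix. -/
theorem dd_hmatrix_iff_tset_hmatrix (n : ℕ) (hn : 2 ≤ n)
    (A : Matrix (Fin n) (Fin n) ℂ) (hDD : IsDD A) :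
    IsHMatrix A ↔ (TSet A = ∅ ∨ IsHMatrix (subMat A (TSet A))) :=
  dd_hmatrix_iff_tset_hmatrix_general n A hDD

end
end
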